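/- arXiv:2410.18196 — 3 statements merged into one kernel-verified Lean document; each statement's English description precedes it below -/
import Mathlib

section
/- For any real square matrix X, the absolute value of det(I + X) is at most exp(tr(X) + ‖X‖_F²/2), where ‖X‖_F is the Frobenius norm. -/
open Matrix

/-! Apply `det M ≤ exp (tr M - n)` for positive semidefinite `M`, which is `x ≤ exp (x - 1)` on each
eigenvalue, to `M = (1 + X)ᵀ (1 + X)`: then `det M = det (1 + X)²` and
`tr M - n = 2 tr X + ‖X‖_F²`. -/

theorem Real.prod_le_exp_sum_sub_card {ι : Type*} [Fintype ι] {x : ι → ℝ} (hx : ∀ i, 0 ≤ x i) :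
    ∏ i, x i ≤ Real.exp (∑ i, x i - Fintype.card ι) :=
  calc ∏ i, x i ≤ ∏ i, Real.exp (x i - 1) :=
        Finset.prod_le_prod (fun i _ ↦ hx i) fun i _ ↦ by linarith [Real.add_one_le_exp (x i - 1)]
    _ = Real.exp (∑ i, x i - Fintype.card ι) := by
        simp [← Real.exp_sum, Finset.sum_sub_distrib]

namespace Matrix

variable {ι : Type*} [Fintype ι] [DecidableEq ι]

theorem PosSemidef.det_le_exp_trace_sub_card {M : Matrix ι ι ℝ} (hM : M.PosSemidef) :
    M.det ≤ Real.exp (M.trace - Fintype.card ι) := by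
  rw [hM.isHermitian.det_eq_prod_eigenvalues, hM.isHermitian.trace_eq_sum_eigenvalues]
  exact Real.prod_le_exp_sum_sub_card hM.eigenvalues_nonneg

theorem trace_transpose_mul_self {m n R : Type*} [Fintype m] [Fintype n] [CommSemiring R]
    (A : Matrix m n R) : (Aᵀ * A).trace = ∑ i, ∑ j, A i j ^ 2 := by
  simp only [trace, diag, mul_apply, transpose_apply, sq]
  exact Finset.sum_comm

theorem trace_transpose_one_add_mul_one_add {R : Type*} [CommRing R] (X : Matrix ι ι R) :
    ((1 + X)ᵀ * (1 + X)).trace = Fintype.card ι + 2 * X.trace + (Xᵀ * X).trace := by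
  simp only [transpose_add, transpose_one, add_mul, mul_add, one_mul, mul_one, trace_add,
    trace_one, trace_transpose]
  ring

end Matrix

/-- For any real square matrix `X`, `|det (I + X)| ≤ exp (tr X + ‖X‖_F² / 2)`,
where `‖X‖_F² = ∑ i j, (X i j)²` is the squared Frobenius norm. -/
theorem abs_det_one_add_le_exp_trace_add_frobenius_sq
    (n : ℕ) (X : Matrix (Fin n) (Fin n) ℝ) :
    |Matrix.det (1 + X)| ≤
      Real.exp (Matrix.trace X + (∑ i, ∑ j, (X i j) ^ 2) / 2) := by
  refine abs_le_of_sq_le_sq ?_ (Real.exp_pos _).le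
  calc (1 + X).det ^ 2 = ((1 + X)ᵀ * (1 + X)).det := by rw [det_mul, det_transpose, sq]
    _ ≤ Real.exp (((1 + X)ᵀ * (1 + X)).trace - n) := by
        have h := (posSemidef_conjTranspose_mul_self (1 + X)).det_le_exp_trace_sub_card
        rwa [conjTranspose_eq_transpose_of_trivial, Fintype.card_fin] at h
    _ = Real.exp (X.trace + (∑ i, ∑ j, X i j ^ 2) / 2) ^ 2 := by
        rw [trace_transpose_one_add_mul_one_add, trace_transpose_mul_self, Fintype.card_fin,
          ← Real.exp_nat_mul]
        congr 1
        push_cast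
        ring
end

section
/- For any β ≥ 0, ε > 0, if m ≥ 32β + ln(1/ε), then for all E ∈ [-2,2], the degree-m Taylor polynomial of exp(-βE) around 0 approximates exp(-βE) to error at most ε: |exp(-βE) − Σ_{j=0}^m (-βE)^j/j!| ≤ ε. -/
/-!
The Taylor remainder of `exp` at `x` is bounded by the tail `∑_{k > m} |x| ^ k / k!`, and
multiplying the `k`-th term of that tail by `e ^ k ≥ e ^ (m + 1)` shows it is at most
`exp (e |x|) / e ^ (m + 1)`. For `|x| ≤ 2β` this is `exp (e · 2β - m - 1) ≤ exp (32β - m) ≤ ε`.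
-/

open Finset Nat

namespace Real

theorem exp_sub_sum_range_eq_tsum (x : ℝ) (n : ℕ) :
    exp x - ∑ k ∈ range n, x ^ k / k ! = ∑' k, x ^ (k + n) / (k + n)! := by
  simp only [exp_eq_exp_ℝ, NormedSpace.exp_eq_tsum_div]
  rw [← (summable_pow_div_factorial x).sum_add_tsum_nat_add n, add_sub_cancel_left]

theorem abs_exp_sub_sum_range_le (x : ℝ) (n : ℕ) :
    |exp x - ∑ k ∈ range n, x ^ k / k !| ≤ exp |x| - ∑ k ∈ range n, |x| ^ k / k ! := by
  simpa [← Complex.ofReal_exp, ← Complex.ofReal_pow, ← Complex.ofReal_natCast,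
    ← Complex.ofReal_div, ← Complex.ofReal_sum, ← Complex.ofReal_sub]
    using Complex.norm_exp_sub_sum_le_exp_norm_sub_sum x n

theorem exp_sub_sum_range_le_exp_mul_div_pow {y t : ℝ} (hy : 0 ≤ y) (ht : 1 ≤ t) (n : ℕ) :
    exp y - ∑ k ∈ range n, y ^ k / k ! ≤ exp (t * y) / t ^ n := by
  have hterm (k : ℕ) : y ^ (k + n) / (k + n)! ≤ (t * y) ^ (k + n) / (k + n)! / t ^ n := by
    have ht₀ : 0 < t := by linarith
    have hrw : (t * y) ^ (k + n) / (k + n)! / t ^ n = t ^ k * (y ^ (k + n) / (k + n)!) := by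
      rw [mul_pow, pow_add]
      field_simp
    rw [hrw]
    exact le_mul_of_one_le_left (by positivity) (one_le_pow₀ ht)
  have hsum (z : ℝ) : Summable fun k ↦ z ^ (k + n) / (k + n)! :=
    (summable_nat_add_iff n).2 (summable_pow_div_factorial z)
  calc exp y - ∑ k ∈ range n, y ^ k / k !
      = ∑' k, y ^ (k + n) / (k + n)! := exp_sub_sum_range_eq_tsum y n
    _ ≤ ∑' k, (t * y) ^ (k + n) / (k + n)! / t ^ n :=
        (hsum y).tsum_le_tsum hterm ((hsum (t * y)).div_const _)
    _ = (exp (t * y) - ∑ k ∈ range n, (t * y) ^ k / k !) / t ^ n := by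
        rw [tsum_div_const, exp_sub_sum_range_eq_tsum]
    _ ≤ exp (t * y) / t ^ n := by
        gcongr
        exact sub_le_self _ (sum_nonneg fun k _ ↦ by positivity)

end Real

/-- For `β ≥ 0`, `ε > 0`, if `m ≥ 32β + ln(1/ε)`, then for all `E ∈ [-2,2]`,
`|exp(-βE) − ∑_{j=0}^m (-βE)^j / j!| ≤ ε`. -/
theorem exp_taylor_uniform_bound (β ε : ℝ) (hβ : 0 ≤ β) (hε : 0 < ε)
    (m : ℕ) (hm : 32 * β + Real.log (1 / ε) ≤ (m : ℝ)) :
    ∀ E ∈ Set.Icc (-2 : ℝ) 2,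
      |Real.exp (-β * E) -
        ∑ j ∈ Finset.range (m + 1), (-β * E) ^ j / (Nat.factorial j : ℝ)| ≤ ε := by
  intro E hE
  have hx : |-β * E| ≤ 2 * β := by
    rw [abs_mul, abs_neg, abs_of_nonneg hβ, mul_comm]
    exact mul_le_mul_of_nonneg_right (abs_le.2 hE) hβ
  have he : Real.exp 1 * |-β * E| ≤ 32 * β :=
    calc Real.exp 1 * |-β * E| ≤ 3 * (2 * β) :=
          mul_le_mul (by linarith [Real.exp_one_lt_d9]) hx (abs_nonneg _) (by norm_num)
      _ ≤ 32 * β := by linarith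
  calc |Real.exp (-β * E) - ∑ j ∈ range (m + 1), (-β * E) ^ j / j !|
      ≤ Real.exp |-β * E| - ∑ j ∈ range (m + 1), |-β * E| ^ j / j ! :=
        Real.abs_exp_sub_sum_range_le _ _
    _ ≤ Real.exp (Real.exp 1 * |-β * E|) / Real.exp 1 ^ (m + 1) :=
        Real.exp_sub_sum_range_le_exp_mul_div_pow (abs_nonneg _) (Real.one_le_exp zero_le_one) _
    _ = Real.exp (Real.exp 1 * |-β * E| - (m + 1)) := by
        rw [← Real.exp_nat_mul, mul_one, ← Real.exp_sub]
        push_cast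
        rfl
    _ ≤ Real.exp (Real.log ε) :=
        Real.exp_le_exp.2 (by rw [one_div, Real.log_inv] at hm; linarith)
    _ = ε := Real.exp_log hε
end

section
/- Let λ₁,…,λ_d be iid with the Wigner semicircle density p(λ) = √(4−λ²)/(2π). Let s denote the gap between an energy and the next largest, and ŝ := d·s its normalized version. Then the density of ŝ at 0 equals (1/d)·d·∫_{−2}^{2} p(λ)² dλ = 8/(3π²) > 0, and the gap density is monotonically decreasing. -/
open MeasureTheory intervalIntegral

/-- The Wigner semicircle density `p(λ) = √(4−λ²)/(2π)`. -/
noncomputable def wignerDensity (l : ℝ) : ℝ := Real.sqrt (4 - l ^ 2) / (2 * Real.pi)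

/-- The CDF `F` of the Wigner semicircle distribution. -/
noncomputable def wignerCDF (l : ℝ) : ℝ := ∫ x in (-2 : ℝ)..l, wignerDensity x

/-- The level-spacing density for `d` iid Wigner semicircle energies:
`P(s) = d ∫_{−2}^{2−s} p(λ) p(λ+s) (1 + F(λ) − F(λ+s))^{d−2} dλ`. -/
noncomputable def gapDensity (d : ℕ) (s : ℝ) : ℝ :=
  d * ∫ l in (-2 : ℝ)..(2 - s),
    wignerDensity l * wignerDensity (l + s) * (1 + wignerCDF l - wignerCDF (l + s)) ^ (d - 2)

lemma wd_nonneg (l : ℝ) : 0 ≤ wignerDensity l :=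
  div_nonneg (Real.sqrt_nonneg _) (by positivity)

lemma wd_continuous : Continuous wignerDensity :=
  ((continuous_const.sub (continuous_pow 2)).sqrt).div_const _

lemma wd_ii (a b : ℝ) : IntervalIntegrable wignerDensity volume a b :=
  wd_continuous.intervalIntegrable a b

lemma wcdf_continuous : Continuous wignerCDF :=
  intervalIntegral.continuous_primitive wd_ii (-2)

lemma wcdf_sub (x y : ℝ) : wignerCDF y - wignerCDF x = ∫ l in x..y, wignerDensity l :=
  integral_interval_sub_left (wd_ii _ _) (wd_ii _ _)

lemma wcdf_mono {x y : ℝ} (h : x ≤ y) : wignerCDF x ≤ wignerCDF y := by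
  have h1 := wcdf_sub x y
  have h2 : 0 ≤ ∫ l in x..y, wignerDensity l :=
    intervalIntegral.integral_nonneg h (fun u _ => wd_nonneg u)
  linarith

lemma wd_zero {l : ℝ} (h : 4 - l ^ 2 ≤ 0) : wignerDensity l = 0 := by
  unfold wignerDensity
  rw [Real.sqrt_eq_zero_of_nonpos h, zero_div]

lemma wd_total : ∫ l in (-2:ℝ)..2, wignerDensity l = 1 := by
  unfold wignerDensity
  rw [intervalIntegral.integral_div]
  have h4 : ∫ l in (-2:ℝ)..2, Real.sqrt (4 - l ^ 2) = 2 * Real.pi := by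
    have hc : ∀ l : ℝ, Real.sqrt (4 - l ^ 2) = 2 * Real.sqrt (1 - (l / 2) ^ 2) := by
      intro l
      have h : (4 : ℝ) - l ^ 2 = 4 * (1 - (l / 2) ^ 2) := by ring
      rw [h, Real.sqrt_mul (by norm_num), show Real.sqrt 4 = 2 by
        rw [show (4:ℝ) = 2 ^ 2 by norm_num, Real.sqrt_sq (by norm_num)]]
    simp_rw [hc]
    rw [intervalIntegral.integral_const_mul]
    have h := intervalIntegral.integral_comp_div (a := (-2:ℝ)) (b := 2)
      (f := fun x => Real.sqrt (1 - x ^ 2)) (c := 2) (by norm_num)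
    rw [h]
    norm_num [integral_sqrt_one_sub_sq]
    ring
  rw [h4]
  field_simp

lemma wcdf_gap_le_one (x y : ℝ) : wignerCDF y - wignerCDF x ≤ 1 := by
  rw [wcdf_sub]
  set a := min x (-2) with ha
  set b := max y 2 with hb
  have hax : a ≤ x := min_le_left _ _
  have ha2 : a ≤ -2 := min_le_right _ _
  have hyb : y ≤ b := le_max_left _ _
  have h2b : (2:ℝ) ≤ b := le_max_right _ _
  have e1 : ∫ l in a..(-2:ℝ), wignerDensity l = 0 := by
    have h : Set.EqOn wignerDensity 0 (Set.uIcc a (-2)) := by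
      intro l hl
      rw [Set.uIcc_of_le ha2] at hl
      exact wd_zero (by nlinarith [hl.2])
    rw [intervalIntegral.integral_congr h]; simp
  have e2 : ∫ l in (2:ℝ)..b, wignerDensity l = 0 := by
    have h : Set.EqOn wignerDensity 0 (Set.uIcc 2 b) := by
      intro l hl
      rw [Set.uIcc_of_le h2b] at hl
      exact wd_zero (by nlinarith [hl.1])
    rw [intervalIntegral.integral_congr h]; simp
  have eab : ∫ l in a..b, wignerDensity l = 1 := by
    rw [← intervalIntegral.integral_add_adjacent_intervals (b := (-2:ℝ)) (wd_ii _ _) (wd_ii _ _),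
      ← intervalIntegral.integral_add_adjacent_intervals (a := (-2:ℝ)) (b := (2:ℝ)) (wd_ii _ _) (wd_ii _ _),
      e1, e2, wd_total]
    ring
  have split : ∫ l in a..b, wignerDensity l =
      (∫ l in a..x, wignerDensity l) + (∫ l in x..y, wignerDensity l) + ∫ l in y..b, wignerDensity l := by
    rw [intervalIntegral.integral_add_adjacent_intervals (wd_ii _ _) (wd_ii _ _),
      intervalIntegral.integral_add_adjacent_intervals (wd_ii _ _) (wd_ii _ _)]
  have n1 : 0 ≤ ∫ l in a..x, wignerDensity l :=
    intervalIntegral.integral_nonneg hax (fun u _ => wd_nonneg u)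
  have n2 : 0 ≤ ∫ l in y..b, wignerDensity l :=
    intervalIntegral.integral_nonneg hyb (fun u _ => wd_nonneg u)
  linarith [eab, split]

lemma pprod_mono (m : ℝ) {a₁ a₂ : ℝ} (h0 : 0 ≤ a₁) (h12 : a₁ ≤ a₂) :
    wignerDensity (m - a₂) * wignerDensity (m + a₂) ≤
      wignerDensity (m - a₁) * wignerDensity (m + a₁) := by
  rcases le_or_gt (4 - (m - a₂) ^ 2) 0 with h | h1
  · rw [wd_zero h, zero_mul]; exact mul_nonneg (wd_nonneg _) (wd_nonneg _)
  rcases le_or_gt (4 - (m + a₂) ^ 2) 0 with h | h2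
  · rw [wd_zero h, mul_zero]; exact mul_nonneg (wd_nonneg _) (wd_nonneg _)
  have ha2 : a₂ < 2 := by nlinarith [sq_nonneg m, sq_nonneg (a₂ - 2), sq_nonneg (a₂ + 2)]
  have key1 : (0:ℝ) ≤ ((m - a₁) - (m - a₂)) * ((m + a₂) - (m - a₁)) :=
    mul_nonneg (by linarith) (by linarith)
  have key2 : (0:ℝ) ≤ ((m + a₁) - (m - a₂)) * ((m + a₂) - (m + a₁)) :=
    mul_nonneg (by linarith) (by linarith)
  have hq1 : 0 ≤ 4 - (m - a₁) ^ 2 := by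
    nlinarith [sq_nonneg (m - a₁), sq_nonneg (m - a₂ + (m + a₂))]
  have hq2 : 0 ≤ 4 - (m + a₁) ^ 2 := by
    nlinarith [sq_nonneg (m + a₁), sq_nonneg (m - a₂ + (m + a₂))]
  unfold wignerDensity
  rw [div_mul_div_comm, div_mul_div_comm, ← Real.sqrt_mul h1.le, ← Real.sqrt_mul hq1,
    div_le_div_iff_of_pos_right (by positivity)]
  exact Real.sqrt_le_sqrt (by
    nlinarith [sq_nonneg m,
      mul_nonneg (sub_nonneg.2 (mul_self_le_mul_self h0 h12)) (sq_nonneg m)])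

/-- The midpoint-form integrand. -/
noncomputable def midInt (k : ℕ) (s : ℝ) (m : ℝ) : ℝ :=
  wignerDensity (m - s / 2) * wignerDensity (m + s / 2) *
    (1 + wignerCDF (m - s / 2) - wignerCDF (m + s / 2)) ^ k

lemma midInt_nonneg (k : ℕ) (s : ℝ) (hs : 0 ≤ s) (m : ℝ) : 0 ≤ midInt k s m := by
  have hB : 0 ≤ 1 + wignerCDF (m - s / 2) - wignerCDF (m + s / 2) := by
    have := wcdf_gap_le_one (m - s / 2) (m + s / 2)
    linarith
  exact mul_nonneg (mul_nonneg (wd_nonneg _) (wd_nonneg _)) (pow_nonneg hB k)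

lemma midInt_mono (k : ℕ) {s₁ s₂ : ℝ} (h0 : 0 ≤ s₁) (h12 : s₁ ≤ s₂) (m : ℝ) :
    midInt k s₂ m ≤ midInt k s₁ m := by
  have hB2 : 0 ≤ 1 + wignerCDF (m - s₂ / 2) - wignerCDF (m + s₂ / 2) := by
    have := wcdf_gap_le_one (m - s₂ / 2) (m + s₂ / 2)
    linarith
  have hBle : 1 + wignerCDF (m - s₂ / 2) - wignerCDF (m + s₂ / 2) ≤
      1 + wignerCDF (m - s₁ / 2) - wignerCDF (m + s₁ / 2) := by
    have h1 := wcdf_mono (show m - s₂ / 2 ≤ m - s₁ / 2 by linarith)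
    have h2 := wcdf_mono (show m + s₁ / 2 ≤ m + s₂ / 2 by linarith)
    linarith
  exact mul_le_mul (pprod_mono m (by linarith) (by linarith))
    (pow_le_pow_left₀ hB2 hBle k) (pow_nonneg hB2 k)
    (mul_nonneg (wd_nonneg _) (wd_nonneg _))

lemma midInt_cont (k : ℕ) (s : ℝ) : Continuous (midInt k s) := by
  unfold midInt
  exact ((wd_continuous.comp (continuous_id.sub continuous_const)).mul
      (wd_continuous.comp (continuous_id.add continuous_const))).mul
    (((continuous_const.add (wcdf_continuous.comp (continuous_id.sub continuous_const))).sub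
      (wcdf_continuous.comp (continuous_id.add continuous_const))).pow k)

/-- The original integral in midpoint form. -/
lemma gap_integral_eq (k : ℕ) (s : ℝ) :
    (∫ l in (-2 : ℝ)..(2 - s),
      wignerDensity l * wignerDensity (l + s) * (1 + wignerCDF l - wignerCDF (l + s)) ^ k) =
    ∫ m in (-2 + s / 2 : ℝ)..(2 - s / 2), midInt k s m := by
  have h : (fun m : ℝ => midInt k s m) = fun m : ℝ =>
      (fun l => wignerDensity l * wignerDensity (l + s) *
        (1 + wignerCDF l - wignerCDF (l + s)) ^ k) (m - s / 2) := by
    funext m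
    simp only [midInt]
    rw [show m - s / 2 + s = m + s / 2 by ring]
  rw [h]
  have h2 := intervalIntegral.integral_comp_sub_right (a := -2 + s / 2) (b := 2 - s / 2)
    (fun l => wignerDensity l * wignerDensity (l + s) * (1 + wignerCDF l - wignerCDF (l + s)) ^ k)
    (s / 2)
  rw [h2, show (-2 : ℝ) + s / 2 - s / 2 = -2 by ring, show (2 : ℝ) - s / 2 - s / 2 = 2 - s by ring]

lemma mid_integral_zero (k : ℕ) {s : ℝ} (hs : 4 ≤ s) :
    (∫ m in (-2 + s / 2 : ℝ)..(2 - s / 2), midInt k s m) = 0 := by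
  rw [intervalIntegral.integral_congr (g := fun _ => (0:ℝ)) ?_, intervalIntegral.integral_zero]
  intro m hm
  rw [Set.uIcc_of_ge (by linarith)] at hm
  have h1 : 2 - s / 2 ≤ m := hm.1
  have h2 : (2:ℝ) ≤ m + s / 2 := by linarith
  simp only [midInt]
  rw [wd_zero (l := m + s / 2) (by nlinarith), mul_zero, zero_mul]

lemma mid_integral_nonneg (k : ℕ) {s : ℝ} (hs : 0 ≤ s) :
    0 ≤ ∫ m in (-2 + s / 2 : ℝ)..(2 - s / 2), midInt k s m := by
  rcases le_or_gt s 4 with h | h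
  · exact intervalIntegral.integral_nonneg (by linarith) (fun m _ => midInt_nonneg k s hs m)
  · rw [mid_integral_zero k h.le]

lemma mid_integral_mono (k : ℕ) {s₁ s₂ : ℝ} (h0 : 0 ≤ s₁) (h12 : s₁ ≤ s₂) :
    (∫ m in (-2 + s₂ / 2 : ℝ)..(2 - s₂ / 2), midInt k s₂ m) ≤
      ∫ m in (-2 + s₁ / 2 : ℝ)..(2 - s₁ / 2), midInt k s₁ m := by
  rcases le_or_gt s₂ 4 with h4 | h4
  · calc (∫ m in (-2 + s₂ / 2 : ℝ)..(2 - s₂ / 2), midInt k s₂ m)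
        ≤ ∫ m in (-2 + s₂ / 2 : ℝ)..(2 - s₂ / 2), midInt k s₁ m := by
          apply intervalIntegral.integral_mono_on (by linarith)
            ((midInt_cont k s₂).intervalIntegrable _ _)
            ((midInt_cont k s₁).intervalIntegrable _ _)
          exact fun m _ => midInt_mono k h0 h12 m
      _ ≤ ∫ m in (-2 + s₁ / 2 : ℝ)..(2 - s₁ / 2), midInt k s₁ m := by
          have hii : ∀ a b : ℝ, IntervalIntegrable (midInt k s₁) volume a b :=
            fun a b => (midInt_cont k s₁).intervalIntegrable a b
          have split : (∫ m in (-2 + s₁ / 2 : ℝ)..(2 - s₁ / 2), midInt k s₁ m) =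
              (∫ m in (-2 + s₁ / 2 : ℝ)..(-2 + s₂ / 2), midInt k s₁ m) +
              (∫ m in (-2 + s₂ / 2 : ℝ)..(2 - s₂ / 2), midInt k s₁ m) +
              ∫ m in (2 - s₂ / 2 : ℝ)..(2 - s₁ / 2), midInt k s₁ m := by
            rw [intervalIntegral.integral_add_adjacent_intervals (hii _ _) (hii _ _),
              intervalIntegral.integral_add_adjacent_intervals (hii _ _) (hii _ _)]
          have n1 : 0 ≤ ∫ m in (-2 + s₁ / 2 : ℝ)..(-2 + s₂ / 2), midInt k s₁ m :=
            intervalIntegral.integral_nonneg (by linarith) (fun m _ => midInt_nonneg k s₁ h0 m)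
          have n2 : 0 ≤ ∫ m in (2 - s₂ / 2 : ℝ)..(2 - s₁ / 2), midInt k s₁ m :=
            intervalIntegral.integral_nonneg (by linarith) (fun m _ => midInt_nonneg k s₁ h0 m)
          linarith
  · rw [mid_integral_zero k h4.le]
    exact mid_integral_nonneg k h0

/-- For `d` iid semicircle-distributed energies, the density of the normalized gap
`ŝ = d·s`, namely `P̂(ŝ) = (1/d) P(ŝ/d)`, satisfies `P̂(0) = 8/(3π²) > 0` and is
monotonically decreasing in `ŝ`. -/
theorem poissonian_statistics_of_iid_semicircle (d : ℕ) (hd : 2 ≤ d) :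
    ((1 / d : ℝ) * gapDensity d (0 / d) = 8 / (3 * Real.pi ^ 2)) ∧
    (0 < 8 / (3 * Real.pi ^ 2)) ∧
    (∀ s₁ s₂ : ℝ, 0 ≤ s₁ → s₁ ≤ s₂ →
      (1 / d : ℝ) * gapDensity d (s₂ / d) ≤ (1 / d : ℝ) * gapDensity d (s₁ / d)) := by
  have hd0 : (0:ℝ) < d := by positivity
  refine ⟨?_, by positivity, ?_⟩
  · rw [zero_div]
    unfold gapDensity
    have hint : (∫ l in (-2 : ℝ)..(2 - 0),
        wignerDensity l * wignerDensity (l + 0) * (1 + wignerCDF l - wignerCDF (l + 0)) ^ (d - 2)) =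
        ∫ l in (-2 : ℝ)..2, (4 - l ^ 2) / (4 * Real.pi ^ 2) := by
      rw [show (2:ℝ) - 0 = 2 by ring]
      apply intervalIntegral.integral_congr
      intro l hl
      rw [Set.uIcc_of_le (by norm_num)] at hl
      have h1 : 0 ≤ 4 - l ^ 2 := by nlinarith [hl.1, hl.2]
      simp only [add_zero]
      rw [show (1 : ℝ) + wignerCDF l - wignerCDF l = 1 by ring, one_pow, mul_one]
      unfold wignerDensity
      rw [div_mul_div_comm, Real.mul_self_sqrt h1]
      ring_nf
    rw [hint, intervalIntegral.integral_div]
    have hval : (∫ x in (-2:ℝ)..2, 4 - x ^ 2) = 32 / 3 := by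
      rw [intervalIntegral.integral_sub (intervalIntegrable_const)
        ((continuous_pow 2).intervalIntegrable _ _), integral_pow,
        intervalIntegral.integral_const]
      norm_num
    rw [hval]
    have hpi : Real.pi ≠ 0 := Real.pi_ne_zero
    field_simp
    ring
  · intro s₁ s₂ h0 h12
    have key : gapDensity d (s₂ / d) ≤ gapDensity d (s₁ / d) := by
      unfold gapDensity
      have h1 : 0 ≤ s₁ / d := by positivity
      have h2 : s₁ / d ≤ s₂ / d := by gcongr
      exact mul_le_mul_of_nonneg_left (by
        rw [gap_integral_eq, gap_integral_eq]
        exact mid_integral_mono (d - 2) h1 h2) (by positivity)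
    have : (0:ℝ) ≤ 1 / d := by positivity
    exact mul_le_mul_of_nonneg_left key this
end
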